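/- arXiv:2106.06254 — 2 statements merged into one kernel-verified Lean document; each statement's English description precedes it below -/
import Mathlib

section
/- Let M, N, P be h-sets in ℝ² and f, g : ℝ² → ℝ² continuous maps such that M f-covers N and N g-covers P, in the sense of covering relations. Then there exists a point z in the interior of M (relative to the h-set structure, i.e., z ∈ c_M⁻¹((-1,1)²)) such that f(z) lies in c_N⁻¹((-1,1)²) and g(f(z)) ∈ P. -/
/-- The closed unit square `[-1,1]²`. -/
def unitSquare : Set (ℝ × ℝ) := Set.Icc (-1 : ℝ) 1 ×ˢ Set.Icc (-1 : ℝ) 1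

/-- The open unit square `(-1,1)²`. -/
def openSquare : Set (ℝ × ℝ) := Set.Ioo (-1 : ℝ) 1 ×ˢ Set.Ioo (-1 : ℝ) 1

/-- Covering relation `M ⟹f N` expressed through the homeomorphisms `cM, cN`
of the h-sets: with `f_c = cN ∘ f ∘ cM⁻¹`, the left/right edges of the square
are mapped beyond `x = ∓1` (exit condition, in one of the two orientations),
and the image of the square misses `[-1,1] × (ℝ \ (-1,1))` (entry condition). -/
def Covers (cM cN : ℝ × ℝ ≃ₜ ℝ × ℝ) (f : ℝ × ℝ → ℝ × ℝ) : Prop :=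
  (((∀ y ∈ Set.Icc (-1 : ℝ) 1, (cN (f (cM.symm (-1, y)))).1 < -1) ∧
    (∀ y ∈ Set.Icc (-1 : ℝ) 1, 1 < (cN (f (cM.symm (1, y)))).1)) ∨
   ((∀ y ∈ Set.Icc (-1 : ℝ) 1, (cN (f (cM.symm (1, y)))).1 < -1) ∧
    (∀ y ∈ Set.Icc (-1 : ℝ) 1, 1 < (cN (f (cM.symm (-1, y)))).1))) ∧
  (∀ p ∈ unitSquare, cN (f (cM.symm p)) ∉ Set.Icc (-1 : ℝ) 1 ×ˢ (Set.Ioo (-1 : ℝ) 1)ᶜ)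

/-
In coordinates put `F = cN ∘ f ∘ cM⁻¹` and `G = cP ∘ g ∘ cN⁻¹`, and let `r` be the
coordinatewise retraction of the plane onto the square (`clampSquare`). Along the segment `t ↦ (t, 0)` the function
`ψ t = (G (r (F (t, 0)))).1` is continuous, and the two exit conditions make `ψ (-1)` and `ψ 1` lie
beyond opposite vertical edges, so `ψ` vanishes at some `t ∈ (-1, 1)`. If `F (t, 0)` lay outside
the open strip `|x| < 1`, its retraction would be on a vertical edge and `G` would push it beyond
`|x| > 1`; hence it lies in the strip, the entry condition for `F` puts it in the open square,
where `r` is the identity, and the entry condition for `G` puts `G (F (t, 0))` in the square.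
-/

open Set

theorem openSquare_subset_unitSquare : openSquare ⊆ unitSquare :=
  prod_mono Ioo_subset_Icc_self Ioo_subset_Icc_self

def OnOppositeSides (a b : ℝ) : Prop :=
  a < -1 ∧ 1 < b ∨ b < -1 ∧ 1 < a

theorem OnOppositeSides.symm {a b : ℝ} (h : OnOppositeSides a b) : OnOppositeSides b a :=
  Or.symm h

theorem ContinuousOn.exists_mem_Ioo_eq_zero {ψ : ℝ → ℝ} {a b : ℝ} (hab : a ≤ b)
    (hψ : ContinuousOn ψ (Icc a b)) (h : OnOppositeSides (ψ a) (ψ b)) :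
    ∃ t ∈ Ioo a b, ψ t = 0 := by
  rcases h with ⟨ha, hb⟩ | ⟨hb, ha⟩
  · exact intermediate_value_Ioo hab hψ ⟨by linarith, by linarith⟩
  · exact intermediate_value_Ioo' hab hψ ⟨by linarith, by linarith⟩

noncomputable def clampSquare (p : ℝ × ℝ) : ℝ × ℝ :=
  (projIcc (-1) 1 (by norm_num) p.1, projIcc (-1) 1 (by norm_num) p.2)

@[fun_prop]
theorem continuous_clampSquare : Continuous clampSquare := by
  unfold clampSquare
  fun_prop

theorem clampSquare_mem (p : ℝ × ℝ) : clampSquare p ∈ unitSquare :=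
  ⟨Subtype.prop _, Subtype.prop _⟩

theorem clampSquare_of_mem {p : ℝ × ℝ} (hp : p ∈ unitSquare) : clampSquare p = p := by
  simp [clampSquare, projIcc_of_mem _ hp.1, projIcc_of_mem _ hp.2]

theorem fst_clampSquare_of_le {p : ℝ × ℝ} (h : p.1 ≤ -1) : (clampSquare p).1 = -1 := by
  simp [clampSquare, projIcc_of_le_left _ h]

theorem fst_clampSquare_of_ge {p : ℝ × ℝ} (h : 1 ≤ p.1) : (clampSquare p).1 = 1 := by
  simp [clampSquare, projIcc_of_right_le _ h]

theorem fst_clampSquare_of_not_mem {p : ℝ × ℝ} (h : p.1 ∉ Ioo (-1 : ℝ) 1) :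
    (clampSquare p).1 = -1 ∨ (clampSquare p).1 = 1 := by
  rcases not_and_or.1 h with hle | hge
  · exact Or.inl (fst_clampSquare_of_le (not_lt.1 hle))
  · exact Or.inr (fst_clampSquare_of_ge (not_lt.1 hge))

section CoveringConditions

def CoveringExit (F : ℝ × ℝ → ℝ × ℝ) : Prop :=
  ((∀ y ∈ Icc (-1 : ℝ) 1, (F (-1, y)).1 < -1) ∧ (∀ y ∈ Icc (-1 : ℝ) 1, 1 < (F (1, y)).1)) ∨
  ((∀ y ∈ Icc (-1 : ℝ) 1, (F (1, y)).1 < -1) ∧ (∀ y ∈ Icc (-1 : ℝ) 1, 1 < (F (-1, y)).1))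

def CoveringEntry (F : ℝ × ℝ → ℝ × ℝ) : Prop :=
  ∀ p ∈ unitSquare, F p ∉ Icc (-1 : ℝ) 1 ×ˢ (Ioo (-1 : ℝ) 1)ᶜ

theorem covers_iff (cM cN : ℝ × ℝ ≃ₜ ℝ × ℝ) (f : ℝ × ℝ → ℝ × ℝ) :
    Covers cM cN f ↔
      CoveringExit (fun p ↦ cN (f (cM.symm p))) ∧ CoveringEntry (fun p ↦ cN (f (cM.symm p))) :=
  Iff.rfl

variable {F : ℝ × ℝ → ℝ × ℝ}

theorem CoveringExit.onOppositeSides (hF : CoveringExit F) {y y' : ℝ}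
    (hy : y ∈ Icc (-1 : ℝ) 1) (hy' : y' ∈ Icc (-1 : ℝ) 1) :
    OnOppositeSides (F (-1, y)).1 (F (1, y')).1 := by
  rcases hF with ⟨hl, hr⟩ | ⟨hr, hl⟩
  · exact Or.inl ⟨hl y hy, hr y' hy'⟩
  · exact Or.inr ⟨hr y' hy', hl y hy⟩

theorem CoveringExit.one_lt_abs_fst (hF : CoveringExit F) {x y : ℝ} (hx : x = -1 ∨ x = 1)
    (hy : y ∈ Icc (-1 : ℝ) 1) : 1 < |(F (x, y)).1| := by
  by_contra! h
  obtain ⟨hlo, hhi⟩ := abs_le.1 h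
  rcases hF.onOppositeSides hy hy with ⟨hl, hr⟩ | ⟨hr, hl⟩ <;>
    rcases hx with rfl | rfl <;> linarith

theorem CoveringExit.one_lt_abs_fst_clampSquare (hF : CoveringExit F) {p : ℝ × ℝ}
    (hp : p.1 ∉ Ioo (-1 : ℝ) 1) : 1 < |(F (clampSquare p)).1| := by
  rw [← Prod.mk.eta (p := clampSquare p)]
  exact hF.one_lt_abs_fst (fst_clampSquare_of_not_mem hp) (clampSquare_mem p).2

theorem CoveringExit.onOppositeSides_clampSquare (hF : CoveringExit F) {p q : ℝ × ℝ}
    (h : OnOppositeSides p.1 q.1) :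
    OnOppositeSides (F (clampSquare p)).1 (F (clampSquare q)).1 := by
  have hp := (clampSquare_mem p).2
  have hq := (clampSquare_mem q).2
  rcases h with ⟨hpl, hqr⟩ | ⟨hql, hpr⟩
  · rw [← Prod.mk.eta (p := clampSquare p), ← Prod.mk.eta (p := clampSquare q),
      fst_clampSquare_of_le hpl.le, fst_clampSquare_of_ge hqr.le]
    exact hF.onOppositeSides hp hq
  · rw [← Prod.mk.eta (p := clampSquare p), ← Prod.mk.eta (p := clampSquare q),
      fst_clampSquare_of_ge hpr.le, fst_clampSquare_of_le hql.le]
    exact (hF.onOppositeSides hq hp).symm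

theorem CoveringEntry.snd_mem_Ioo (hF : CoveringEntry F) {p : ℝ × ℝ} (hp : p ∈ unitSquare)
    (hx : (F p).1 ∈ Icc (-1 : ℝ) 1) : (F p).2 ∈ Ioo (-1 : ℝ) 1 := by
  by_contra hy
  exact hF p hp ⟨hx, hy⟩

end CoveringConditions

theorem exists_mem_openSquare_of_coveringExit_of_coveringEntry {F G : ℝ × ℝ → ℝ × ℝ}
    (hF : Continuous F) (hG : Continuous G) (hFx : CoveringExit F) (hFe : CoveringEntry F)
    (hGx : CoveringExit G) (hGe : CoveringEntry G) :
    ∃ p ∈ openSquare, F p ∈ openSquare ∧ G (F p) ∈ unitSquare := by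
  have hψ : Continuous fun t : ℝ ↦ (G (clampSquare (F (t, 0)))).1 := by fun_prop
  have h0 : (0 : ℝ) ∈ Icc (-1 : ℝ) 1 := by norm_num
  obtain ⟨t, ht, hψt⟩ := hψ.continuousOn.exists_mem_Ioo_eq_zero (by norm_num)
    (hGx.onOppositeSides_clampSquare (hFx.onOppositeSides h0 h0))
  have hsq : ((t, 0) : ℝ × ℝ) ∈ unitSquare := ⟨Ioo_subset_Icc_self ht, h0⟩
  have hx : (F (t, 0)).1 ∈ Ioo (-1 : ℝ) 1 := by
    by_contra hout
    have := hGx.one_lt_abs_fst_clampSquare hout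
    rw [hψt, abs_zero] at this
    linarith
  have hFt : F (t, 0) ∈ openSquare := ⟨hx, hFe.snd_mem_Ioo hsq (Ioo_subset_Icc_self hx)⟩
  have hFt' : F (t, 0) ∈ unitSquare := openSquare_subset_unitSquare hFt
  have hGx0 : (G (F (t, 0))).1 = 0 := by
    rwa [clampSquare_of_mem hFt'] at hψt
  refine ⟨(t, 0), ⟨ht, by norm_num⟩, hFt, ?_, ?_⟩
  · rw [hGx0]; exact h0
  · exact Ioo_subset_Icc_self (hGe.snd_mem_Ioo hFt' (by rw [hGx0]; exact h0))

theorem covering_composition_general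
    (P : Set (ℝ × ℝ)) (cM cN cP : ℝ × ℝ ≃ₜ ℝ × ℝ)
    (hP : cP '' P = unitSquare)
    (f g : ℝ × ℝ → ℝ × ℝ) (hf : Continuous f) (hg : Continuous g)
    (h1 : Covers cM cN f) (h2 : Covers cN cP g) :
    ∃ z : ℝ × ℝ, cM z ∈ openSquare ∧ cN (f z) ∈ openSquare ∧ g (f z) ∈ P := by
  obtain ⟨hfx, hfe⟩ := (covers_iff cM cN f).1 h1
  obtain ⟨hgx, hge⟩ := (covers_iff cN cP g).1 h2
  obtain ⟨p, hp, hfp, hgfp⟩ := exists_mem_openSquare_of_coveringExit_of_coveringEntry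
    (by fun_prop) (by fun_prop) hfx hfe hgx hge
  refine ⟨cM.symm p, by simpa using hp, hfp, ?_⟩
  rw [← hP, cN.symm_apply_apply] at hgfp
  exact cP.injective.mem_set_image.1 hgfp

/-- if `M ⟹f N` and `N ⟹g P`, then there is a point `z` in the
interior of `M` with `f(z)` in the interior of `N` and `g(f(z)) ∈ P`. -/
theorem covering_composition
    (M N P : Set (ℝ × ℝ)) (cM cN cP : ℝ × ℝ ≃ₜ ℝ × ℝ)
    (hM : cM '' M = unitSquare) (hN : cN '' N = unitSquare) (hP : cP '' P = unitSquare)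
    (f g : ℝ × ℝ → ℝ × ℝ) (hf : Continuous f) (hg : Continuous g)
    (h1 : Covers cM cN f) (h2 : Covers cN cP g) :
    ∃ z : ℝ × ℝ, cM z ∈ openSquare ∧ cN (f z) ∈ openSquare ∧ g (f z) ∈ P :=
  covering_composition_general P cM cN cP hP f g hf hg h1 h2
end

section
/- Let N be an h-set, h a horizontal disk in N, and v a vertical disk in N. Then the images |h| and |v| intersect: there exists a point z ∈ N with z ∈ |h| ∩ |v|. -/
/-- A horizontal disk in the h-set `(N, c)`. -/
def IsHorizontalDisk (N : Set (ℝ × ℝ)) (c : ℝ × ℝ ≃ₜ ℝ × ℝ) (h : ℝ → ℝ × ℝ) : Prop :=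
  ContinuousOn h (Set.Icc (-1 : ℝ) 1) ∧
    ∀ s ∈ Set.Icc (-1 : ℝ) 1, h s ∈ N ∧ (c (h s)).1 = s

/-- A vertical disk in the h-set `(N, c)`. -/
def IsVerticalDisk (N : Set (ℝ × ℝ)) (c : ℝ × ℝ ≃ₜ ℝ × ℝ) (v : ℝ → ℝ × ℝ) : Prop :=
  ContinuousOn v (Set.Icc (-1 : ℝ) 1) ∧
    ∀ s ∈ Set.Icc (-1 : ℝ) 1, v s ∈ N ∧ (c (v s)).2 = s

/-!
In the coordinates given by `c`, the horizontal disk is the graph `y = g x` and the vertical disk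
is the graph `x = k y` of continuous self-maps `g, k` of `[-1, 1]`. A fixed point `s` of `k ∘ g`,
which exists by the intermediate value theorem, gives the common point
`c (h s) = (s, g s) = c (v (g s))`.
-/

open Set

namespace IsHorizontalDisk

variable {N : Set (ℝ × ℝ)} {c : ℝ × ℝ ≃ₜ ℝ × ℝ} {h : ℝ → ℝ × ℝ}

theorem continuousOn_snd (hh : IsHorizontalDisk N c h) :
    ContinuousOn (fun s => (c (h s)).2) (Icc (-1) 1) :=
  (continuous_snd.comp c.continuous).comp_continuousOn hh.1

theorem mapsTo_snd (hN : c '' N ⊆ unitSquare) (hh : IsHorizontalDisk N c h) :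
    MapsTo (fun s => (c (h s)).2) (Icc (-1) 1) (Icc (-1) 1) :=
  fun s hs => (hN (mem_image_of_mem c (hh.2 s hs).1)).2

end IsHorizontalDisk

namespace IsVerticalDisk

variable {N : Set (ℝ × ℝ)} {c : ℝ × ℝ ≃ₜ ℝ × ℝ} {v : ℝ → ℝ × ℝ}

theorem continuousOn_fst (hv : IsVerticalDisk N c v) :
    ContinuousOn (fun t => (c (v t)).1) (Icc (-1) 1) :=
  (continuous_fst.comp c.continuous).comp_continuousOn hv.1

theorem mapsTo_fst (hN : c '' N ⊆ unitSquare) (hv : IsVerticalDisk N c v) :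
    MapsTo (fun t => (c (v t)).1) (Icc (-1) 1) (Icc (-1) 1) :=
  fun t ht => (hN (mem_image_of_mem c (hv.2 t ht).1)).1

end IsVerticalDisk

/-- in an h-set `N`, every horizontal disk `h` and every vertical
disk `v` intersect: there is `z ∈ N` with `z ∈ |h| ∩ |v|`. -/
theorem horizontal_vertical_disks_intersect
    (N : Set (ℝ × ℝ)) (c : ℝ × ℝ ≃ₜ ℝ × ℝ) (hN : c '' N = unitSquare)
    (h v : ℝ → ℝ × ℝ)
    (hh : IsHorizontalDisk N c h) (hv : IsVerticalDisk N c v) :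
    ∃ z ∈ N, z ∈ h '' Set.Icc (-1 : ℝ) 1 ∧ z ∈ v '' Set.Icc (-1 : ℝ) 1 := by
  have hgI := hh.mapsTo_snd hN.subset
  obtain ⟨s, hs, hfix⟩ := exists_mem_Icc_isFixedPt_of_mapsTo
    (hv.continuousOn_fst.comp hh.continuousOn_snd hgI) (by norm_num)
    ((hv.mapsTo_fst hN.subset).comp hgI)
  set t := (c (h s)).2
  have ht : t ∈ Icc (-1) 1 := hgI hs
  have hst : h s = v t := c.injective <| Prod.ext
    (by rw [(hh.2 s hs).2]; exact hfix.symm) (hv.2 t ht).2.symm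
  exact ⟨h s, (hh.2 s hs).1, mem_image_of_mem h hs, hst ▸ mem_image_of_mem v ht⟩
end
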